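/- arXiv:math/9401212 — 7 statements merged into one kernel-verified Lean document; each statement's English description precedes it below -/
import Mathlib

section
/- If I is a κ-complete ideal over an uncountable cardinal κ containing all singletons such that the quotient Boolean algebra P(κ)/I is complete, and I is not λ-saturated for some cardinal λ (i.e., there exists an antichain with respect to I of size λ), then 2^λ ≤ 2^κ. -/
/-!
Send a subfamily `S` of the antichain `𝒜` to (a representative of) its supremum in `P(κ)/I`.
For `A ∈ 𝒜` we have `[A] ≤ sup S` when `A ∈ S`, while `[A] ∧ sup S = 0` when `A ∉ S`, because
`[A]` is disjoint from every member of `S` and hence from their supremum. As `[A] ≠ 0`, the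
supremum determines `S`, so this map `P(𝒜) → P(κ)` is injective and `2^λ ≤ 2^κ`.
-/

universe u

/-- A proper, κ-complete ideal on `P(κ)` (κ realized as the type `α`)
containing all singletons. -/
structure IdealOver (α : Type u) where
  carrier : Set (Set α)
  proper : Set.univ ∉ carrier
  downward : ∀ {A B : Set α}, A ⊆ B → B ∈ carrier → A ∈ carrier
  singleton_mem : ∀ x : α, {x} ∈ carrier
  complete : ∀ s : Set (Set α), Cardinal.mk ↥s < Cardinal.mk α → s ⊆ carrier →
    ⋃₀ s ∈ carrier

/-- `𝒜` is an antichain with respect to `I`: a family of I-positive sets whose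
pairwise intersections lie in `I`. -/
def IsAntichainFor {α : Type u} (I : IdealOver α) (𝒜 : Set (Set α)) : Prop :=
  (∀ A ∈ 𝒜, A ∉ I.carrier) ∧ ∀ A ∈ 𝒜, ∀ B ∈ 𝒜, A ≠ B → A ∩ B ∈ I.carrier

/-- `[Z]` is a least upper bound of `{[A] : A ∈ F}` in `P(α)/I`, where
`[A] ≤ [B]` iff `A \ B ∈ I`. -/
def IsSupFor {α : Type u} (I : IdealOver α) (F : Set (Set α)) (Z : Set α) : Prop :=
  (∀ A ∈ F, A \ Z ∈ I.carrier) ∧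
    ∀ W : Set α, (∀ A ∈ F, A \ W ∈ I.carrier) → Z \ W ∈ I.carrier

/-- The quotient Boolean algebra `P(α)/I` is complete: every family of classes
has a least upper bound. -/
def QuotComplete {α : Type u} (I : IdealOver α) : Prop :=
  ∀ F : Set (Set α), ∃ Z : Set α, IsSupFor I F Z

namespace IdealOver

variable {α : Type u} (I : IdealOver α)

theorem union_mem (hα : 2 < Cardinal.mk α) {A B : Set α} (hA : A ∈ I.carrier)
    (hB : B ∈ I.carrier) : A ∪ B ∈ I.carrier := by
  have hpair : Cardinal.mk ↥({A, B} : Set (Set α)) < Cardinal.mk α :=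
    calc Cardinal.mk ↥({A, B} : Set (Set α))
        ≤ Cardinal.mk ↥({B} : Set (Set α)) + 1 := Cardinal.mk_insert_le
      _ = 2 := by rw [Cardinal.mk_singleton, one_add_one_eq_two]
      _ < Cardinal.mk α := hα
  simpa using I.complete {A, B} hpair (by rintro C (rfl | rfl) <;> assumption)

variable {I}

theorem inter_mem_of_isSupFor {𝒜 F : Set (Set α)} {Z A : Set α} (hanti : IsAntichainFor I 𝒜)
    (hF : F ⊆ 𝒜) (hsup : IsSupFor I F Z) (hA : A ∈ 𝒜) (hAF : A ∉ F) : Z ∩ A ∈ I.carrier := by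
  have hdisj : ∀ B ∈ F, B \ Aᶜ ∈ I.carrier := fun B hB => by
    rw [Set.sdiff_compl]
    exact hanti.2 B (hF hB) A hA (ne_of_mem_of_not_mem hB hAF)
  simpa only [Set.sdiff_compl] using hsup.2 Aᶜ hdisj

theorem subset_of_isSupFor (hα : 2 < Cardinal.mk α) {𝒜 F G : Set (Set α)} {Z : Set α}
    (hanti : IsAntichainFor I 𝒜) (hF : F ⊆ 𝒜) (hG : G ⊆ 𝒜)
    (hFsup : IsSupFor I F Z) (hGsup : IsSupFor I G Z) : F ⊆ G := by
  intro A hAF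
  by_contra hAG
  have hsplit : A ⊆ (A \ Z) ∪ (Z ∩ A) := by rw [Set.inter_comm, Set.sdiff_union_inter]
  refine hanti.1 A (hF hAF) (I.downward hsplit (I.union_mem hα ?_ ?_))
  · exact hFsup.1 A hAF
  · exact inter_mem_of_isSupFor hanti hG hGsup (hF hAF) hAG

theorem eq_of_isSupFor (hα : 2 < Cardinal.mk α) {𝒜 F G : Set (Set α)} {Z : Set α}
    (hanti : IsAntichainFor I 𝒜) (hF : F ⊆ 𝒜) (hG : G ⊆ 𝒜)
    (hFsup : IsSupFor I F Z) (hGsup : IsSupFor I G Z) : F = G :=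
  (subset_of_isSupFor hα hanti hF hG hFsup hGsup).antisymm
    (subset_of_isSupFor hα hanti hG hF hGsup hFsup)

end IdealOver

/-- if the quotient of a κ-complete ideal over an uncountable κ is
complete and there is an antichain of size λ, then `2^λ ≤ 2^κ`. -/
theorem stmt0 {α : Type u} (I : IdealOver α)
    (huncount : Cardinal.aleph0 < Cardinal.mk α)
    (hcomp : QuotComplete I)
    (lam : Cardinal.{u}) (𝒜 : Set (Set α))
    (hanti : IsAntichainFor I 𝒜) (hcard : Cardinal.mk ↥𝒜 = lam) :
    (2 : Cardinal.{u}) ^ lam ≤ (2 : Cardinal.{u}) ^ Cardinal.mk α := by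
  subst hcard
  have hα : 2 < Cardinal.mk α := (Cardinal.natCast_lt_aleph0 (n := 2)).trans huncount
  choose sup hsup using hcomp
  have hinj : Function.Injective fun S : Set ↥𝒜 => sup (Subtype.val '' S) := by
    intro S T (hST : sup _ = sup _)
    refine Subtype.val_injective.image_injective ?_
    exact IdealOver.eq_of_isSupFor hα hanti (Subtype.coe_image_subset 𝒜 S)
      (Subtype.coe_image_subset 𝒜 T) (hsup _) (hST ▸ hsup _)
  simpa only [Cardinal.mk_set] using Cardinal.mk_le_of_injective hinj
end

section
/- If I is a κ-complete ideal over an uncountable cardinal κ containing all singletons such that P(κ)/I is a complete Boolean algebra, then I is 2^κ-saturated; that is, every antichain with respect to I has cardinality strictly less than 2^κ. -/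
universe u

/-- Binary unions stay in the ideal (uses κ-completeness and κ > ℵ₀). -/
lemma union_mem_aux {α : Type u} (I : IdealOver α)
    (huncount : Cardinal.aleph0 < Cardinal.mk α)
    {X Y : Set α} (hX : X ∈ I.carrier) (hY : Y ∈ I.carrier) :
    X ∪ Y ∈ I.carrier := by
  have hcard : Cardinal.mk ↥({X, Y} : Set (Set α)) < Cardinal.mk α := by
    have hfin : (({X, Y} : Set (Set α))).Finite := (Set.finite_singleton Y).insert X
    have := hfin.to_subtype
    exact (Cardinal.lt_aleph0_of_finite _).trans huncount
  have := I.complete {X, Y} hcard (by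
    intro S hS
    rcases hS with h | h
    · rwa [h]
    · rw [Set.mem_singleton_iff] at h; rwa [h])
  rwa [Set.sUnion_pair] at this

/-- If `A` meets every member of `F` in a set in `I`, then `A` meets any sup of `F`
in a set in `I` (distributivity, derived from the sup property). -/
lemma inter_sup_mem {α : Type u} (I : IdealOver α)
    (huncount : Cardinal.aleph0 < Cardinal.mk α)
    {F : Set (Set α)} {Z A : Set α} (hZ : IsSupFor I F Z)
    (h : ∀ B ∈ F, A ∩ B ∈ I.carrier) : A ∩ Z ∈ I.carrier := by
  have h1 : ∀ B ∈ F, B \ (Z \ A) ∈ I.carrier := by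
    intro B hB
    refine I.downward (B := (B \ Z) ∪ (A ∩ B)) ?_ ?_
    · intro x hx
      rcases hx with ⟨hxB, hxn⟩
      by_cases hxZ : x ∈ Z
      · right; exact ⟨by_contra fun hA => hxn ⟨hxZ, hA⟩, hxB⟩
      · left; exact ⟨hxB, hxZ⟩
    · exact union_mem_aux I huncount (hZ.1 B hB) (h B hB)
  have h2 := hZ.2 (Z \ A) h1
  refine I.downward ?_ h2
  intro x hx
  exact ⟨hx.2, fun hc => hc.2 hx.1⟩

/-- completeness of `P(κ)/I` implies `I` is `2^κ`-saturated:
every antichain with respect to `I` has cardinality `< 2^κ`. -/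
theorem stmt1 {α : Type u} (I : IdealOver α)
    (huncount : Cardinal.aleph0 < Cardinal.mk α)
    (hcomp : QuotComplete I) :
    ∀ 𝒜 : Set (Set α), IsAntichainFor I 𝒜 →
      Cardinal.mk ↥𝒜 < (2 : Cardinal.{u}) ^ Cardinal.mk α := by
  intro 𝒜 h𝒜
  by_contra hge
  push_neg at hge
  choose Z hZ using hcomp
  set f : Set ↥𝒜 → Set α := fun T => Z (Subtype.val '' T) with hf
  -- key: if a ∈ T, a ∉ T', then f T ≠ f T'
  have key : ∀ (T T' : Set ↥𝒜) (a : ↥𝒜), a ∈ T → a ∉ T' → f T ≠ f T' := by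
    intro T T' a haT haT' heq
    have h1 : a.val \ f T ∈ I.carrier := (hZ _).1 a.val ⟨a, haT, rfl⟩
    have h2 : a.val ∩ f T' ∈ I.carrier := by
      refine inter_sup_mem I huncount (hZ _) ?_
      rintro B ⟨b, hbT', rfl⟩
      refine h𝒜.2 a.val a.2 b.val b.2 ?_
      intro hab
      exact haT' (by rwa [show a = b from Subtype.ext hab])
    rw [heq] at h1
    have := union_mem_aux I huncount h1 h2
    have : a.val ∈ I.carrier := by
      refine I.downward ?_ this
      intro x hx
      by_cases hxZ : x ∈ f T'
      · right; exact ⟨hx, hxZ⟩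
      · left; exact ⟨hx, hxZ⟩
    exact h𝒜.1 a.val a.2 this
  have hinj : Function.Injective f := by
    intro T T' heq
    by_contra hne
    rcases Set.not_subset.mp (fun h => hne (le_antisymm h (fun a ha => by
      by_contra haT
      exact key T' T a ha haT heq.symm))) with ⟨a, haT, haT'⟩
    exact key T T' a haT haT' heq
  have hle : Cardinal.mk (Set ↥𝒜) ≤ Cardinal.mk (Set α) := ⟨⟨f, hinj⟩⟩
  rw [Cardinal.mk_set, Cardinal.mk_set] at hle
  have h1 : (2 : Cardinal.{u}) ^ ((2 : Cardinal.{u}) ^ Cardinal.mk α)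
      ≤ (2 : Cardinal.{u}) ^ Cardinal.mk ↥𝒜 :=
    Cardinal.power_le_power_left two_ne_zero hge
  exact absurd ((Cardinal.cantor _).trans_le (h1.trans hle)) (lt_irrefl _)
end

section
/- Suppose I is a κ-complete ideal over κ containing all singletons such that P(κ)/I is complete, and suppose 2^κ < 2^{κ⁺}. Then I is κ⁺-saturated. -/
universe u

/-- if `P(κ)/I` is complete and `2^κ < 2^{κ⁺}`, then `I` is
`κ⁺`-saturated: every antichain has cardinality `≤ κ`. -/
theorem stmt2 {α : Type u} (I : IdealOver α)
    (hcomp : QuotComplete I)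
    (hpow : (2 : Cardinal.{u}) ^ Cardinal.mk α <
      (2 : Cardinal.{u}) ^ Order.succ (Cardinal.mk α)) :
    ∀ 𝒜 : Set (Set α), IsAntichainFor I 𝒜 →
      Cardinal.mk ↥𝒜 ≤ Cardinal.mk α := by
  intro 𝒜 hA
  by_contra hle
  push_neg at hle
  obtain ⟨hpos, hanti⟩ := hA
  rcases lt_or_ge (Cardinal.mk α) Cardinal.aleph0 with hfin | hinf
  · -- finite case
    rcases isEmpty_or_nonempty α with he | hne
    · obtain ⟨Z, hZ1, _⟩ := hcomp {Set.univ}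
      have h1 : Set.univ \ Z ∈ I.carrier := hZ1 _ rfl
      have h2 : Set.univ \ Z = (Set.univ : Set α) := by
        ext x; exact (he.false x).elim
      exact I.proper (h2 ▸ h1)
    · haveI : Finite α := Cardinal.mk_lt_aleph0_iff.mp hfin
      haveI : Fintype α := Fintype.ofFinite α
      have huniv : ∀ A ∈ 𝒜, A = Set.univ := by
        intro A hAm
        by_contra hne'
        apply hpos A hAm
        have hsub : A ⊂ Set.univ := (Set.ssubset_univ_iff).mpr hne'
        haveI : Fintype ↥A := Fintype.ofFinite _
        have hcard : Fintype.card ↥A < Fintype.card α := by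
          have h := Set.card_lt_card hsub
          have he : Fintype.card ↥(Set.univ : Set α) = Fintype.card α :=
            Fintype.card_congr (Equiv.Set.univ α)
          exact lt_of_lt_of_le h he.le
        have hmklt : Cardinal.mk ↥A < Cardinal.mk α := by
          rw [Cardinal.mk_fintype, Cardinal.mk_fintype]
          exact_mod_cast hcard
        have hAeq : A = ⋃₀ ((fun x => ({x} : Set α)) '' A) := by
          rw [Set.sUnion_image]
          exact (Set.biUnion_of_singleton A).symm
        rw [hAeq]
        apply I.complete
        · rwa [Cardinal.mk_image_eq Set.singleton_injective]
        · rintro S ⟨x, _, rfl⟩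
          exact I.singleton_mem x
      have h1 : Cardinal.mk ↥𝒜 ≤ 1 := by
        have : 𝒜 ⊆ {Set.univ} := fun A hAm => huniv A hAm
        calc Cardinal.mk ↥𝒜 ≤ Cardinal.mk ↥({Set.univ} : Set (Set α)) :=
              Cardinal.mk_le_mk_of_subset this
          _ = 1 := Cardinal.mk_singleton _
      have h2 : (1 : Cardinal) ≤ Cardinal.mk α :=
        Cardinal.one_le_iff_ne_zero.mpr (Cardinal.mk_ne_zero α)
      exact absurd (h1.trans h2) (not_le.mpr hle)
  · -- infinite case
    have hpos0 : (0 : Cardinal) < Cardinal.mk α :=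
      lt_of_lt_of_le Cardinal.aleph0_pos hinf
    have hempty : (∅ : Set α) ∈ I.carrier := by
      have := I.complete ∅ (by simpa using hpos0) (Set.empty_subset _)
      simpa using this
    have hunion : ∀ {A B : Set α}, A ∈ I.carrier → B ∈ I.carrier →
        A ∪ B ∈ I.carrier := by
      intro A B hAc hBc
      have hcard : Cardinal.mk ↥({A, B} : Set (Set α)) < Cardinal.mk α := by
        have h2 : Cardinal.mk ↥({A, B} : Set (Set α)) ≤ 2 := by
          have := Cardinal.mk_insert_le (s := ({B} : Set (Set α))) (a := A)
          rw [Cardinal.mk_singleton] at this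
          exact this.trans_eq one_add_one_eq_two
        exact lt_of_le_of_lt h2 (lt_of_lt_of_le (Cardinal.nat_lt_aleph0 2) hinf)
      have := I.complete {A, B} hcard (by
        rintro S (rfl | rfl)
        exacts [hAc, hBc])
      simpa using this
    -- setoid
    let r : Setoid (Set α) :=
      ⟨fun S T => S \ T ∈ I.carrier ∧ T \ S ∈ I.carrier,
        fun S => by rw [Set.diff_self]; exact ⟨hempty, hempty⟩,
        fun h => ⟨h.2, h.1⟩,
        fun {S T U} h1 h2 => by
          constructor
          · exact I.downward (by intro x hx; simp at hx ⊢; tauto)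
              (hunion h1.1 h2.1)
          · exact I.downward (by intro x hx; simp at hx ⊢; tauto)
              (hunion h2.2 h1.2)⟩
    choose Z hZ using hcomp
    have key : ∀ X Y : Set (Set α), X ⊆ 𝒜 → Y ⊆ 𝒜 →
        ∀ A, A ∈ X → A ∉ Y → ¬ r.r (Z X) (Z Y) := by
      intro X Y hX hY A hAX hAY hrel
      apply hpos A (hX hAX)
      have hAZX : A \ Z X ∈ I.carrier := (hZ X).1 A hAX
      have hcap : Z Y ∩ A ∈ I.carrier := by
        have hW : Z Y \ (Z Y \ A) ∈ I.carrier := by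
          apply (hZ Y).2
          intro B hB
          have hBA : B ∩ A ∈ I.carrier :=
            hanti B (hY hB) A (hX hAX) (fun e => hAY (e ▸ hB))
          have hsub : B \ (Z Y \ A) ⊆ (B \ Z Y) ∪ (B ∩ A) := by
            intro x hx
            simp only [Set.mem_diff, Set.mem_union, Set.mem_inter_iff] at hx ⊢
            tauto
          exact I.downward hsub (hunion ((hZ Y).1 B hB) hBA)
        have : Z Y \ (Z Y \ A) = Z Y ∩ A := by
          ext x; simp only [Set.mem_diff, Set.mem_inter_iff]; tauto
        rwa [this] at hW
      have hsub : A ⊆ (A \ Z X) ∪ ((Z X \ Z Y) ∪ (Z Y ∩ A)) := by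
        intro x hx
        simp only [Set.mem_diff, Set.mem_union, Set.mem_inter_iff]
        tauto
      exact I.downward hsub (hunion hAZX (hunion hrel.1 hcap))
    have hinj : Function.Injective
        (fun X : Set ↥𝒜 => Quotient.mk r (Z (Subtype.val '' X))) := by
      intro X Y hXY
      have hrel : r.r (Z (Subtype.val '' X)) (Z (Subtype.val '' Y)) :=
        Quotient.exact hXY
      by_contra hne
      have hex : ∃ a : ↥𝒜, (a ∈ X ∧ a ∉ Y) ∨ (a ∈ Y ∧ a ∉ X) := by
        by_contra hc
        push_neg at hc
        apply hne
        ext a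
        have := hc a
        tauto
      obtain ⟨a, ha⟩ := hex
      have hXs : Subtype.val '' X ⊆ 𝒜 := by
        rintro _ ⟨b, _, rfl⟩; exact b.2
      have hYs : Subtype.val '' Y ⊆ 𝒜 := by
        rintro _ ⟨b, _, rfl⟩; exact b.2
      rcases ha with ⟨haX, haY⟩ | ⟨haY, haX⟩
      · refine key _ _ hXs hYs (↑a) (Set.mem_image_of_mem _ haX) ?_ hrel
        rintro ⟨b, hbY, hba⟩
        exact haY (Subtype.ext hba ▸ hbY)
      · refine key _ _ hYs hXs (↑a) (Set.mem_image_of_mem _ haY) ?_ ⟨hrel.2, hrel.1⟩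
        rintro ⟨b, hbX, hba⟩
        exact haX (Subtype.ext hba ▸ hbX)
    have hq : Cardinal.mk (Set ↥𝒜) ≤ Cardinal.mk (Quotient r) :=
      Cardinal.mk_le_of_injective hinj
    have hq2 : Cardinal.mk (Quotient r) ≤ Cardinal.mk (Set α) :=
      Cardinal.mk_quotient_le
    have h1 : (2 : Cardinal.{u}) ^ Cardinal.mk ↥𝒜 ≤ 2 ^ Cardinal.mk α := by
      have := hq.trans hq2
      rwa [Cardinal.mk_set, Cardinal.mk_set] at this
    have h2 : (2 : Cardinal.{u}) ^ Order.succ (Cardinal.mk α) ≤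
        2 ^ Cardinal.mk ↥𝒜 :=
      Cardinal.power_le_power_left (by norm_num) (Order.succ_le_of_lt hle)
    exact absurd (h2.trans h1) (not_le.mpr hpow)
end

section
/- Assuming CH, the forcing Sup_S(A, B) is ω₁-linked with least upper bounds: it can be written as a union of ℵ₁ many sets, each consisting of pairwise compatible conditions that moreover have least upper bounds; specifically, any two conditions ⟨w₀, c, d⟩ and ⟨w₁, c, d⟩ sharing the same c and d are compatible with least upper bound ⟨w₀ ∪ w₁, c, d⟩. -/
/-- The ordinal ω₁. -/
noncomputable def om1 : Ordinal.{0} := (Cardinal.aleph 1).ord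

/-- `C` is a club (closed unbounded set) in the ordinal `o`. -/
def ClubIn (o : Ordinal.{0}) (C : Set Ordinal.{0}) : Prop :=
  C ⊆ Set.Iio o ∧
  (∀ a < o, ∃ b ∈ C, a ≤ b) ∧
  ∀ a < o, (C ∩ Set.Iio a).Nonempty → sSup (C ∩ Set.Iio a) = a → a ∈ C

/-- `T` is stationary in the ordinal `o`: it meets every club in `o`. -/
def StatIn (o : Ordinal.{0}) (T : Set Ordinal.{0}) : Prop :=
  ∀ C : Set Ordinal.{0}, ClubIn o C → (T ∩ C).Nonempty

/-- A condition of the forcing `Sup_S(𝒜,ℬ)`: `w` a countable subset of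
`𝒜 ∪ ℬ`, `c` a countable closed set of countable ordinals containing the
supremum of each of its nonempty subsets (in particular `sup c ∈ c`), and a
2-valued function `d` (only its values on `c` are relevant). -/
structure SupCond (𝒜 ℬ : Set (Set Ordinal.{0})) where
  w : Set (Set Ordinal.{0})
  c : Set Ordinal.{0}
  d : Ordinal.{0} → Bool
  w_countable : w.Countable
  w_sub : w ⊆ 𝒜 ∪ ℬ
  c_countable : c.Countable
  c_sub : c ⊆ Set.Iio om1
  c_closed : ∀ s ⊆ c, s.Nonempty → sSup s ∈ c

/-- The order on `Sup_S(𝒜,ℬ)`: `p ≤ q` iff `q.w ⊆ p.w`, `q.c` is an initial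
segment of `p.c`, `p.d` extends `q.d` on `q.c`, and every new point of `p.c`
outside `S` which is coloured `0` avoids all `A ∈ q.w ∩ 𝒜`, and coloured `1`
avoids all `B ∈ q.w ∩ ℬ`. -/
def SupLE (S : Set Ordinal.{0}) {𝒜 ℬ : Set (Set Ordinal.{0})}
    (p q : SupCond 𝒜 ℬ) : Prop :=
  q.w ⊆ p.w ∧ q.c ⊆ p.c ∧
  (∀ a ∈ p.c \ q.c, ∀ b ∈ q.c, b < a) ∧
  (∀ a ∈ q.c, p.d a = q.d a) ∧
  ∀ a ∈ p.c \ q.c, a ∉ S →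
    (p.d a = false → ∀ A ∈ q.w ∩ 𝒜, a ∉ A) ∧
    (p.d a = true → ∀ B ∈ q.w ∩ ℬ, a ∉ B)

/-- Lemma 2.3(b): assuming CH, `Sup_S(𝒜,ℬ)` is ω₁-linked with
least upper bounds: any two conditions sharing the same `c` and `d` (on `c`)
have a least upper bound `⟨w₀ ∪ w₁, c, d⟩`, and the poset is the union of ℵ₁
many sets of pairwise compatible conditions with least upper bounds. -/
theorem stmt12 (S : Set Ordinal.{0})
    (𝒜 ℬ : Set (Set Ordinal.{0}))
    (happ : ∀ A ∈ 𝒜, ∀ B ∈ ℬ, ¬ StatIn om1 (A ∩ B ∩ (Set.Iio om1 \ S)))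
    (hCH : (2 : Cardinal.{1}) ^ Cardinal.aleph0 = Cardinal.aleph 1) :
    (∀ p q : SupCond 𝒜 ℬ, p.c = q.c → (∀ a ∈ p.c, p.d a = q.d a) →
      ∃ r : SupCond 𝒜 ℬ, r.w = p.w ∪ q.w ∧ r.c = p.c ∧
        (∀ a ∈ p.c, r.d a = p.d a) ∧
        SupLE S r p ∧ SupLE S r q ∧
        ∀ r' : SupCond 𝒜 ℬ, SupLE S r' p → SupLE S r' q → SupLE S r' r) ∧
    ∃ T : Set (Set (SupCond 𝒜 ℬ)),
      Cardinal.mk ↥T ≤ Cardinal.aleph 1 ∧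
      ⋃₀ T = Set.univ ∧
      ∀ t ∈ T, ∀ p ∈ t, ∀ q ∈ t,
        ∃ r : SupCond 𝒜 ℬ, SupLE S r p ∧ SupLE S r q ∧
          ∀ r' : SupCond 𝒜 ℬ, SupLE S r' p → SupLE S r' q → SupLE S r' r := by
  classical
  have part1 : ∀ p q : SupCond 𝒜 ℬ, p.c = q.c → (∀ a ∈ p.c, p.d a = q.d a) →
      ∃ r : SupCond 𝒜 ℬ, r.w = p.w ∪ q.w ∧ r.c = p.c ∧
        (∀ a ∈ p.c, r.d a = p.d a) ∧
        SupLE S r p ∧ SupLE S r q ∧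
        ∀ r' : SupCond 𝒜 ℬ, SupLE S r' p → SupLE S r' q → SupLE S r' r := by
    intro p q hc hd
    refine ⟨⟨p.w ∪ q.w, p.c, p.d, p.w_countable.union q.w_countable,
      Set.union_subset p.w_sub q.w_sub, p.c_countable, p.c_sub, p.c_closed⟩,
      rfl, rfl, fun a _ => rfl, ?_, ?_, ?_⟩
    · exact ⟨Set.subset_union_left, subset_rfl,
        fun a ha => (ha.2 ha.1).elim, fun a _ => rfl,
        fun a ha _ => (ha.2 ha.1).elim⟩
    · refine ⟨Set.subset_union_right, ?_, ?_, ?_, ?_⟩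
      · rw [← hc]
      · intro a ha; rw [← hc] at ha; exact (ha.2 ha.1).elim
      · intro a ha; rw [← hc] at ha; exact hd a ha
      · intro a ha; rw [← hc] at ha; exact (ha.2 ha.1).elim
    · rintro r' ⟨hp1, hp2, hp3, hp4, hp5⟩ ⟨hq1, hq2, hq3, hq4, hq5⟩
      refine ⟨Set.union_subset hp1 hq1, hp2, hp3, hp4, ?_⟩
      intro a ha haS
      have H1 := hp5 a ha haS
      have H2 := hq5 a ⟨ha.1, hc ▸ ha.2⟩ haS
      constructor
      · intro hf A hA
        rcases hA.1 with h | h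
        · exact H1.1 hf A ⟨h, hA.2⟩
        · exact H2.1 hf A ⟨h, hA.2⟩
      · intro hf B hB
        rcases hB.1 with h | h
        · exact H1.2 hf B ⟨h, hB.2⟩
        · exact H2.2 hf B ⟨h, hB.2⟩
  refine ⟨part1, ?_⟩
  -- the coding of a condition by its pair ⟨c, d⟩
  set code : SupCond 𝒜 ℬ → Set (↥(Set.Iio om1) × Bool) :=
    fun p => {x | ↑x.1 ∈ p.c ∧ x.2 = p.d ↑x.1} with hcode
  have code_spec : ∀ p q : SupCond 𝒜 ℬ, code p = code q →
      p.c = q.c ∧ ∀ a ∈ p.c, p.d a = q.d a := by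
    intro p q h
    have hmem : ∀ a (ha : a ∈ p.c), a ∈ q.c ∧ p.d a = q.d a := by
      intro a ha
      have hlt : a < om1 := p.c_sub ha
      have : (⟨⟨a, hlt⟩, p.d a⟩ : ↥(Set.Iio om1) × Bool) ∈ code q := by
        rw [← h]; exact ⟨ha, rfl⟩
      exact ⟨this.1, this.2⟩
    have hmem' : ∀ a, a ∈ q.c → a ∈ p.c := by
      intro a ha
      have hlt : a < om1 := q.c_sub ha
      have : (⟨⟨a, hlt⟩, q.d a⟩ : ↥(Set.Iio om1) × Bool) ∈ code p := by
        rw [h]; exact ⟨ha, rfl⟩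
      exact this.1
    exact ⟨Set.ext fun a => ⟨fun ha => (hmem a ha).1, hmem' a⟩,
      fun a ha => (hmem a ha).2⟩
  have code_countable : ∀ p : SupCond 𝒜 ℬ, Cardinal.mk ↥(code p) ≤ Cardinal.aleph0 := by
    intro p
    have : Function.Injective (fun x : ↥(code p) => (⟨↑x.1.1, x.2.1⟩ : ↥p.c)) := by
      rintro ⟨⟨⟨a, hlt⟩, b⟩, hab⟩ ⟨⟨⟨a', hlt'⟩, b'⟩, hab'⟩ hxy
      have ha : a = a' := congrArg Subtype.val hxy
      subst ha
      have hb : b = b' := hab.2.trans hab'.2.symm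
      subst hb
      rfl
    refine le_trans (Cardinal.mk_le_of_injective this) ?_
    exact Cardinal.mk_le_aleph0_iff.mpr (Set.countable_coe_iff.mpr p.c_countable)
  set cls : SupCond 𝒜 ℬ → Set (SupCond 𝒜 ℬ) := fun p => {q | code q = code p} with hcls
  have mem_cls : ∀ p, p ∈ cls p := fun p => rfl
  have cls_eq : ∀ p q : SupCond 𝒜 ℬ, code p = code q → cls p = cls q := by
    intro p q h; simp only [hcls, h]
  refine ⟨Set.range cls, ?_, ?_, ?_⟩
  · -- cardinality
    have hg : ∃ g : ↥(Set.range cls) → { t : Set (↥(Set.Iio om1) × Bool) // Cardinal.mk ↥t ≤ Cardinal.aleph0 },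
        Function.Injective g := by
      refine ⟨fun t => ⟨code t.2.choose, code_countable _⟩, ?_⟩
      intro t t' h
      have h' : code t.2.choose = code t'.2.choose := congrArg Subtype.val h
      have := cls_eq _ _ h'
      ext1
      rw [← t.2.choose_spec, ← t'.2.choose_spec, this]
    obtain ⟨g, hg⟩ := hg
    refine le_trans (Cardinal.mk_le_of_injective hg) ?_
    refine (Cardinal.mk_bounded_set_le _ _).trans ?_
    have hb : Cardinal.mk (↥(Set.Iio om1) × Bool) = Cardinal.aleph 1 := by
      rw [Cardinal.mk_prod, Ordinal.mk_Iio_ordinal, Cardinal.mk_bool]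
      simp only [om1, Cardinal.card_ord, Cardinal.lift_lift, Cardinal.lift_aleph,
        Ordinal.lift_one, Cardinal.lift_ofNat]
      exact Cardinal.mul_eq_left (Cardinal.aleph0_le_aleph 1)
        ((Cardinal.nat_lt_aleph0 2).le.trans (Cardinal.aleph0_le_aleph 1)) two_ne_zero
    rw [hb, max_eq_left (Cardinal.aleph0_le_aleph 1), ← hCH, ← Cardinal.power_mul,
      Cardinal.aleph0_mul_aleph0, hCH]
  · -- covers
    ext p
    simp only [Set.mem_univ, iff_true, Set.mem_sUnion]
    exact ⟨cls p, ⟨p, rfl⟩, mem_cls p⟩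
  · -- linked
    rintro t ⟨p0, rfl⟩ p hp q hq
    have hpq : code p = code q := hp.trans hq.symm
    obtain ⟨hc, hd⟩ := code_spec p q hpq
    obtain ⟨r, -, -, -, h1, h2, h3⟩ := part1 p q hc hd
    exact ⟨r, h1, h2, h3⟩
end

section
/- Suppose I is a κ-complete ideal over κ and P(κ)/I is complete. If G is generic for P(κ)/I − {0} and in the extension there are functions g_n : κ → V (n ∈ ω) in the ground model with [X] forcing g_n to represent a descending ω-sequence in the generic ultrapower, then the sets T_n = {i < κ : g_{n+1}(i) < g_n(i)} satisfy [X] ≤ [T_n] for all n, and hence X ∩ ⋂_n T_n ≠ ∅, yielding a contradiction; consequently no condition forces the generic ultrapower of the ordinals to be ill-founded via ground-model functions into the ordinals bounded by a fixed g₀. -/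
universe u

/-! If `[X] ≤ [T n]` for every `n`, then by σ-completeness of the ideal the set `X ∩ ⋂ n, T n`
is nonempty. A point `i` in it gives the strictly decreasing
sequence of ordinals `g 0 i > g 1 i > ⋯`, which is impossible. -/

namespace IdealOver

variable {α : Type u} (I : IdealOver α)

theorem iUnion_mem_of_countable {ι : Type*} [Countable ι]
    (hα : Cardinal.aleph0 < Cardinal.mk α) {A : ι → Set α} (hA : ∀ i, A i ∈ I.carrier) :
    ⋃ i, A i ∈ I.carrier := by
  have : Countable (Set.range A) := (Set.countable_range A).to_subtype
  rw [← Set.sUnion_range]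
  refine I.complete _ (Cardinal.mk_le_aleph0.trans_lt hα) ?_
  rintro _ ⟨i, rfl⟩
  exact hA i

theorem inter_iInter_nonempty {ι : Type*} [Countable ι]
    (hα : Cardinal.aleph0 < Cardinal.mk α) {X : Set α} (hX : X ∉ I.carrier) {T : ι → Set α}
    (hT : ∀ n, X \ T n ∈ I.carrier) : (X ∩ ⋂ n, T n).Nonempty := by
  by_contra hempty
  have hcover : X ⊆ ⋃ n, X \ T n := by
    intro x hx
    by_contra hx'
    simp only [Set.mem_iUnion, Set.mem_sdiff, not_exists, not_and, not_not] at hx'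
    exact hempty ⟨x, hx, Set.mem_iInter.2 (hx' · hx)⟩
  exact hX (I.downward hcover (I.iUnion_mem_of_countable hα hT))

end IdealOver

theorem stmt13_general {α : Type} (I : IdealOver α)
    (huncount : Cardinal.aleph0 < Cardinal.mk α)
    (X : Set α) (hX : X ∉ I.carrier)
    (g : ℕ → α → Ordinal.{0})
    (hT : ∀ n : ℕ, X \ {i : α | g (n + 1) i < g n i} ∈ I.carrier) :
    False := by
  obtain ⟨i, -, hi⟩ := I.inter_iInter_nonempty huncount hX hT
  exact not_strictAnti_of_wellFoundedLT (g · i)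
    (strictAnti_nat_of_succ_lt fun n => Set.mem_iInter.1 hi n)

/-- if `X` is `I`-positive and ground-model functions
`g n : κ → Ord` satisfy `[X] ≤ [T n]` for `T n = {i : g (n+1) i < g n i}`
(i.e. `X \ T n ∈ I`), then a contradiction follows: by σ-completeness
`X ∩ ⋂ n T n ≠ ∅`, and any point there yields an infinite descending sequence
of ordinals. -/
theorem stmt13 {α : Type} (I : IdealOver α)
    (huncount : Cardinal.aleph0 < Cardinal.mk α)
    (hcomp : QuotComplete I)
    (X : Set α) (hX : X ∉ I.carrier)
    (g : ℕ → α → Ordinal.{0})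
    (hT : ∀ n : ℕ, X \ {i : α | g (n + 1) i < g n i} ∈ I.carrier) :
    False :=
  stmt13_general I huncount X hX g hT
end

section
/- Suppose there is no inner model with a measurable cardinal, κ ≥ ω₃, and I is an ideal over κ such that P(κ)/I is complete and forcing with P(κ)/I − {0} preserves ω₁ and ω₂. If property (∗) holds — whenever ⟨A_α : α < ω₁⟩ is a sequence of maximal antichains with respect to I, for any X ∈ I⁺ there is Y ∈ P(X) ∩ I⁺ such that for every α < ω₁, |{A ∈ A_α : A ∩ Y ∈ I⁺}| ≤ ω₁ — then I is precipitous. -/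
universe u

/-- `𝒜` is a maximal antichain with respect to `I` below `X`. -/
def IsMaxAntichainIn {α : Type u} (I : IdealOver α) (X : Set α)
    (𝒜 : Set (Set α)) : Prop :=
  (∀ A ∈ 𝒜, A ⊆ X ∧ A ∉ I.carrier) ∧
  (∀ A ∈ 𝒜, ∀ B ∈ 𝒜, A ≠ B → A ∩ B ∈ I.carrier) ∧
  (∀ Z : Set α, Z ⊆ X → Z ∉ I.carrier → ∃ A ∈ 𝒜, A ∩ Z ∉ I.carrier)

/-- `I` is precipitous (Jech–Prikry, via the standard combinatorial
characterization): for every `I`-positive `X` and every refining sequence of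
maximal antichains below `X` there is a decreasing branch with nonempty
intersection; equivalently, every generic ultrapower is well-founded. -/
def Precipitous {α : Type u} (I : IdealOver α) : Prop :=
  ∀ X : Set α, X ∉ I.carrier → ∀ 𝒜 : ℕ → Set (Set α),
    (∀ n, IsMaxAntichainIn I X (𝒜 n)) →
    (∀ n, ∀ A ∈ 𝒜 (n + 1), ∃ B ∈ 𝒜 n, A ⊆ B) →
    ∃ F : ℕ → Set α, (∀ n, F n ∈ 𝒜 n) ∧ (∀ n, F (n + 1) ⊆ F n) ∧
      (⋂ n, F n).Nonempty

variable {α : Type u}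


lemma IdealOver.empty_mem (I : IdealOver α) [Nonempty α] : ∅ ∈ I.carrier := by
  obtain ⟨x⟩ := ‹Nonempty α›
  exact I.downward (Set.empty_subset _) (I.singleton_mem x)

lemma IdealOver.union_mem_s15 (I : IdealOver α) (h3 : Cardinal.aleph0 ≤ Cardinal.mk α)
    {A B : Set α} (hA : A ∈ I.carrier) (hB : B ∈ I.carrier) : A ∪ B ∈ I.carrier := by
  have : A ∪ B = ⋃₀ ({A, B} : Set (Set α)) := by simp
  rw [this]
  refine I.complete _ (lt_of_lt_of_le ?_ h3) ?_
  · exact ((Set.finite_singleton B).insert A).lt_aleph0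
  · intro T hT; rcases hT with h | h
    · exact h ▸ hA
    · exact (Set.mem_singleton_iff.mp h) ▸ hB

/-- Every antichain extends to a maximal antichain below `univ`. -/
lemma exists_max_extension (I : IdealOver α) (𝒜 : Set (Set α))
    (h1 : ∀ A ∈ 𝒜, A ∉ I.carrier)
    (h2 : ∀ A ∈ 𝒜, ∀ B ∈ 𝒜, A ≠ B → A ∩ B ∈ I.carrier) :
    ∃ ℬ, 𝒜 ⊆ ℬ ∧ IsMaxAntichainIn I Set.univ ℬ := by
  set P : Set (Set (Set α)) :=
    {𝒟 | (∀ A ∈ 𝒟, A ∉ I.carrier) ∧ ∀ A ∈ 𝒟, ∀ B ∈ 𝒟, A ≠ B → A ∩ B ∈ I.carrier}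
  have hch : ∀ c ⊆ P, IsChain (· ⊆ ·) c → c.Nonempty → ∃ ub ∈ P, ∀ s ∈ c, s ⊆ ub := by
    intro c hcP hchain hcne
    refine ⟨⋃₀ c, ⟨?_, ?_⟩, fun s hs => Set.subset_sUnion_of_mem hs⟩
    · rintro A ⟨𝒟, h𝒟, hA⟩
      exact (hcP h𝒟).1 A hA
    · rintro A ⟨𝒟, h𝒟, hA⟩ B ⟨ℰ, hℰ, hB⟩ hne
      rcases hchain.total h𝒟 hℰ with h | h
      · exact (hcP hℰ).2 A (h hA) B hB hne
      · exact (hcP h𝒟).2 A hA B (h hB) hne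
  obtain ⟨m, hsub, hm, hmax⟩ := zorn_subset_nonempty P hch 𝒜 ⟨h1, h2⟩
  refine ⟨m, hsub, ⟨fun A hA => ⟨Set.subset_univ _, hm.1 A hA⟩, hm.2, ?_⟩⟩
  intro Z _ hZ
  by_contra hno
  push_neg at hno
  have hZm : Z ∈ m := by
    have : insert Z m ∈ P := by
      constructor
      · intro A hA
        rcases hA with rfl | hA
        · exact hZ
        · exact hm.1 A hA
      · intro A hA B hB hne
        rcases hA with rfl | hA <;> rcases hB with rfl | hB
        · exact absurd rfl hne
        · rw [Set.inter_comm]; exact hno B hB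
        · exact hno A hA
        · exact hm.2 A hA B hB hne
    have := hmax this (Set.subset_insert _ _)
    exact this (Set.mem_insert _ _)
  have := hno Z hZm
  rw [Set.inter_self] at this
  exact hZ this

/-- if `κ ≥ ω₃`, `P(κ)/I` is complete, and property (∗) holds —
for every `ω₁`-sequence of maximal antichains and every `I`-positive `X` there
is an `I`-positive `Y ⊆ X` meeting at most `ω₁` members of each antichain
positively — then `I` is precipitous. -/
theorem stmt15 {α : Type u} (I : IdealOver α)
    (hω3 : Cardinal.aleph 3 ≤ Cardinal.mk α)
    (hcomp : QuotComplete I)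
    (hstar : ∀ ι : Type u, Cardinal.mk ι ≤ Cardinal.aleph 1 →
      ∀ 𝒜 : ι → Set (Set α),
        (∀ j, IsMaxAntichainIn I Set.univ (𝒜 j)) →
        ∀ X : Set α, X ∉ I.carrier →
          ∃ Y : Set α, Y ⊆ X ∧ Y ∉ I.carrier ∧
            ∀ j, Cardinal.mk {A : Set α // A ∈ 𝒜 j ∧ A ∩ Y ∉ I.carrier} ≤
              Cardinal.aleph 1) :
    Precipitous I := by
  classical
  intro X hX 𝒜 h𝒜 href
  have hα0 : (0 : Cardinal) < Cardinal.mk α :=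
    lt_of_lt_of_le (Cardinal.aleph_pos 3) hω3
  have hne : Nonempty α := Cardinal.mk_ne_zero_iff.mp hα0.ne'
  have haleph0 : Cardinal.aleph0 ≤ Cardinal.mk α :=
    (Cardinal.aleph0_le_aleph 3).trans hω3
  have h1lt : Cardinal.aleph 1 < Cardinal.mk α :=
    lt_of_lt_of_le (Cardinal.aleph_lt_aleph.mpr (by norm_num)) hω3
  -- extend each antichain to a maximal antichain below `univ`
  have hext : ∀ n : ℕ, ∃ ℬ, 𝒜 n ⊆ ℬ ∧ IsMaxAntichainIn I Set.univ ℬ := fun n =>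
    exists_max_extension I (𝒜 n) (fun A hA => ((h𝒜 n).1 A hA).2) ((h𝒜 n).2.1)
  choose ℬ hℬsub hℬmax using hext
  -- apply (∗)
  have hmkU : Cardinal.mk (ULift.{u} ℕ) ≤ Cardinal.aleph 1 := by
    have : Cardinal.mk (ULift.{u} ℕ) = Cardinal.aleph0 := by simp
    rw [this]; exact Cardinal.aleph0_le_aleph 1
  obtain ⟨Y, hYX, hY, hbound⟩ := hstar (ULift.{u} ℕ) hmkU
    (fun j => ℬ j.down) (fun j => hℬmax j.down) X hX
  -- the positive traces of each antichain on Y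
  set S : ℕ → Set (Set α) := fun n => {A | A ∈ ℬ n ∧ A ∩ Y ∉ I.carrier} with hSdef
  have hScard : ∀ n, Cardinal.mk ↥(S n) ≤ Cardinal.aleph 1 := by
    intro n
    have hinj : Function.Injective
        (fun A : ↥(S n) => (⟨A.1, A.2.1, A.2.2⟩ :
          {A : Set α // A ∈ ℬ n ∧ A ∩ Y ∉ I.carrier})) := by
      intro A B h
      exact Subtype.ext (congrArg Subtype.val h)
    exact le_trans (Cardinal.mk_le_of_injective hinj) (hbound (ULift.up n))
  have hS𝒜 : ∀ n, ∀ A ∈ S n, A ∈ 𝒜 n := by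
    intro n A hA
    have hAYpos : A ∩ Y ∉ I.carrier := hA.2
    have hAYX : A ∩ Y ⊆ X := fun x hx => hYX hx.2
    obtain ⟨B, hB, hBpos⟩ := (h𝒜 n).2.2 (A ∩ Y) hAYX hAYpos
    by_cases hBA : B = A
    · exact hBA ▸ hB
    · exfalso
      have : B ∩ (A ∩ Y) ⊆ B ∩ A := fun x hx => ⟨hx.1, hx.2.1⟩
      exact hBpos (I.downward this ((hℬmax n).2.1 B (hℬsub n hB) A hA.1 hBA))
  -- below Y, each S n covers Y up to an I-small set
  have hE : ∀ n, Y \ (⋃ A ∈ S n, A) ∈ I.carrier := by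
    intro n
    by_contra hpos
    obtain ⟨A, hA, hApos⟩ := (hℬmax n).2.2 _ (Set.subset_univ _) hpos
    have hAY : A ∩ Y ∉ I.carrier := fun h =>
      hApos (I.downward (show A ∩ (Y \ ⋃ A ∈ S n, A) ⊆ A ∩ Y from
        fun x hx => ⟨hx.1, hx.2.1⟩) h)
    have hAS : A ∈ S n := ⟨hA, hAY⟩
    have : A ∩ (Y \ ⋃ A ∈ S n, A) = ∅ := by
      ext x
      simp only [Set.mem_inter_iff, Set.mem_diff, Set.mem_iUnion, Set.mem_empty_iff_false,
        iff_false, not_and, and_imp]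
      intro hxA _ h
      exact absurd ⟨A, hAS, hxA⟩ h
    rw [this] at hApos
    exact hApos I.empty_mem
  -- pairwise intersections within each S n are uniformly I-small
  have hpairs : ∀ n, ∃ Un : Set α, Un ∈ I.carrier ∧
      ∀ A ∈ S n, ∀ B ∈ S n, A ≠ B → A ∩ B ⊆ Un := by
    intro n
    set g : ↥(S n) × ↥(S n) → Set α := fun p =>
      if (p.1 : Set α) = (p.2 : Set α) then ∅ else (p.1 : Set α) ∩ (p.2 : Set α) with hg
    refine ⟨⋃₀ Set.range g, I.complete _ ?_ ?_, ?_⟩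
    · calc Cardinal.mk ↥(Set.range g) ≤ Cardinal.mk (↥(S n) × ↥(S n)) :=
            Cardinal.mk_range_le
        _ ≤ Cardinal.aleph 1 * Cardinal.aleph 1 := by
            rw [Cardinal.mk_prod]
            simp only [Cardinal.lift_id]
            exact mul_le_mul' (hScard n) (hScard n)
        _ = Cardinal.aleph 1 := Cardinal.mul_eq_self (Cardinal.aleph0_le_aleph 1)
        _ < Cardinal.mk α := h1lt
    · rintro T ⟨⟨A, B⟩, rfl⟩
      by_cases h : (A : Set α) = (B : Set α)
      · simp only [hg, h, if_pos rfl]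
        exact I.empty_mem
      · simp only [hg, if_neg h]
        exact (hℬmax n).2.1 A A.2.1 B B.2.1 h
    · intro A hA B hB hab
      have : A ∩ B = g (⟨A, hA⟩, ⟨B, hB⟩) := by simp [hg, hab]
      rw [this]
      exact Set.subset_sUnion_of_mem ⟨_, rfl⟩
  choose U hUI hUsub using hpairs
  -- the total bad set
  set G : ULift.{u} ℕ → Set α :=
    fun k => (Y \ ⋃ A ∈ S k.down, A) ∪ U k.down with hG
  set Bad : Set α := ⋃₀ Set.range G with hBad
  have hBadI : Bad ∈ I.carrier := by
    refine I.complete _ ?_ ?_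
    · refine lt_of_le_of_lt Cardinal.mk_range_le ?_
      have : Cardinal.mk (ULift.{u} ℕ) = Cardinal.aleph0 := by simp
      rw [this]
      exact lt_of_le_of_lt (Cardinal.aleph0_le_aleph 1) h1lt
    · rintro T ⟨k, rfl⟩
      exact I.union_mem_s15 haleph0 (hE k.down) (hUI k.down)
  -- pick a point of Y avoiding the bad set
  have hY' : Y \ Bad ∉ I.carrier := by
    intro h
    exact hY (I.downward (fun x hx => by
      by_cases hb : x ∈ Bad
      · exact Or.inr hb
      · exact Or.inl ⟨hx, hb⟩) (I.union_mem_s15 haleph0 h hBadI))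
  have hY'ne : (Y \ Bad).Nonempty := by
    rcases Set.eq_empty_or_nonempty (Y \ Bad) with h | h
    · exact absurd (h ▸ I.empty_mem) hY'
    · exact h
  obtain ⟨y, hyY, hyB⟩ := hY'ne
  -- at each level, y belongs to a unique member of S n
  have hEx : ∀ n, ∃ A, A ∈ S n ∧ y ∈ A := by
    intro n
    by_contra h
    push_neg at h
    have hyG : y ∈ G (ULift.up n) := by
      refine Set.mem_union_left _ ⟨hyY, ?_⟩
      intro hmem
      rw [Set.mem_iUnion₂] at hmem
      obtain ⟨A, hA, hyA⟩ := hmem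
      exact h A hA hyA
    exact hyB (Set.subset_sUnion_of_mem (Set.mem_range_self (ULift.up n)) hyG)
  choose F hF1 hF2 using hEx
  have huniq : ∀ n, ∀ A ∈ S n, y ∈ A → A = F n := by
    intro n A hA hyA
    by_contra hne'
    have : y ∈ U n := hUsub n A hA (F n) (hF1 n) hne' ⟨hyA, hF2 n⟩
    exact hyB (Set.subset_sUnion_of_mem (Set.mem_range_self (ULift.up n)) (Or.inr this))
  refine ⟨F, fun n => hS𝒜 n _ (hF1 n), ?_, ⟨y, Set.mem_iInter.mpr fun n => hF2 n⟩⟩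
  intro n
  obtain ⟨B, hB, hsub⟩ := href n (F (n + 1)) (hS𝒜 (n + 1) _ (hF1 (n + 1)))
  have hBS : B ∈ S n := by
    refine ⟨hℬsub n hB, fun h => (hF1 (n + 1)).2 (I.downward ?_ h)⟩
    exact fun x hx => ⟨hsub hx.1, hx.2⟩
  have : B = F n := huniq n B hBS (hsub (hF2 (n + 1)))
  exact this ▸ hsub
end

section
/- Let I be a κ-complete ideal over κ with P(κ)/I complete, and suppose γ < κ and [X] forces that τ is a ground-model function from κ to γ. Then there exists a single function f : κ → γ in the ground model such that [X] forces that τ and f represent the same element of the generic ultrapower. -/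
universe u

/-- Lemma 1.5: let `γ < κ` (realized as a type `σ` with
`#σ < κ`) and let a name `τ` for a ground-model function `κ → γ` below `[X]`
be given by a maximal antichain `𝒜` below `X` together with ground functions
`g A : κ → σ` decided on each `A ∈ 𝒜`. Then there is a single ground function
`f : κ → σ` representing the same element of the generic ultrapower below `[X]`:
for each `A ∈ 𝒜`, `f` and `g A` agree on `A` modulo `I`. -/
theorem stmt16 {α σ : Type u} (I : IdealOver α) (hcomp : QuotComplete I)
    (hσ : Cardinal.mk σ < Cardinal.mk α)
    (X : Set α) (hX : X ∉ I.carrier)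
    (𝒜 : Set (Set α))
    (hsub : ∀ A ∈ 𝒜, A ⊆ X ∧ A ∉ I.carrier)
    (hanti : ∀ A ∈ 𝒜, ∀ B ∈ 𝒜, A ≠ B → A ∩ B ∈ I.carrier)
    (hmax : ∀ Z : Set α, Z ⊆ X → Z ∉ I.carrier → ∃ A ∈ 𝒜, A ∩ Z ∉ I.carrier)
    (g : Set α → α → σ) :
    ∃ f : α → σ, ∀ A ∈ 𝒜, {i : α | i ∈ A ∧ f i ≠ g A i} ∈ I.carrier := by
  classical
  -- α is nonempty
  have hne : Nonempty α := by
    by_contra h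
    rw [not_nonempty_iff] at h
    rw [Cardinal.mk_eq_zero α] at hσ
    exact (Cardinal.zero_le _).not_gt hσ
  obtain ⟨x0⟩ := hne
  have hempty : (∅ : Set α) ∈ I.carrier :=
    I.downward (Set.empty_subset _) (I.singleton_mem x0)
  have hσne : Nonempty σ := ⟨g ∅ x0⟩
  by_cases hss : Subsingleton σ
  · refine ⟨fun i => g ∅ i, fun A hA => ?_⟩
    have : {i : α | i ∈ A ∧ g ∅ i ≠ g A i} = ∅ := by
      ext i; simp [Subsingleton.elim (g ∅ i) (g A i)]
    rw [this]; exact hempty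
  -- σ has at least two elements, hence 2 < #α
  have h2σ : (2 : Cardinal) ≤ Cardinal.mk σ := by
    rw [Cardinal.two_le_iff]
    rw [not_subsingleton_iff_nontrivial] at hss
    exact hss.exists_pair_ne
  have h2α : (2 : Cardinal) < Cardinal.mk α := lt_of_le_of_lt h2σ hσ
  -- closure under unions indexed by σ
  have union_mem : ∀ h : σ → Set α, (∀ s, h s ∈ I.carrier) → (⋃ s, h s) ∈ I.carrier := by
    intro h hh
    have hsub' : Set.range h ⊆ I.carrier := by rintro _ ⟨s, rfl⟩; exact hh s
    have hc : Cardinal.mk (Set.range h) < Cardinal.mk α :=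
      lt_of_le_of_lt Cardinal.mk_range_le hσ
    have := I.complete _ hc hsub'
    rwa [Set.sUnion_range] at this
  -- closure under binary union
  have union2 : ∀ {A B : Set α}, A ∈ I.carrier → B ∈ I.carrier → A ∪ B ∈ I.carrier := by
    intro A B hA hB
    have hc : Cardinal.mk ({A, B} : Set (Set α)) < Cardinal.mk α := by
      refine lt_of_le_of_lt ?_ h2α
      calc Cardinal.mk ({A, B} : Set (Set α)) ≤ Cardinal.mk ({B} : Set (Set α)) + 1 :=
            Cardinal.mk_insert_le
        _ = 2 := by rw [Cardinal.mk_singleton]; norm_num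
    have hsub' : ({A, B} : Set (Set α)) ⊆ I.carrier := by
      rintro C hC
      rcases hC with rfl | rfl
      · exact hA
      · exact hB
    have := I.complete _ hc hsub'
    rwa [Set.sUnion_pair] at this
  -- sups of the value classes
  have hZ : ∀ s : σ, ∃ Z : Set α, IsSupFor I ((fun A => A ∩ {i | g A i = s}) '' 𝒜) Z :=
    fun s => hcomp _
  choose Z hZ using hZ
  -- pairwise near-disjointness with the pieces
  have hpair : ∀ A ∈ 𝒜, ∀ s t : σ, s ≠ t → (A ∩ {i | g A i = s}) ∩ Z t ∈ I.carrier := by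
    intro A hA s t hst
    have hmin := (hZ t).2 ((A ∩ {i | g A i = s})ᶜ) ?_
    · have heq : Z t \ (A ∩ {i | g A i = s})ᶜ = (A ∩ {i | g A i = s}) ∩ Z t := by
        ext i; simp only [Set.mem_diff, Set.mem_compl_iff, Set.mem_inter_iff,
          Set.mem_setOf_eq, not_and, not_not]
        tauto
      rwa [heq] at hmin
    · rintro _ ⟨B, hB, rfl⟩
      by_cases hAB : B = A
      · subst hAB
        refine I.downward (fun i hi => ?_) hempty
        obtain ⟨⟨hiB, hgt⟩, hc2⟩ := hi
        have hiAs := Set.notMem_compl_iff.mp hc2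
        exact absurd (hgt ▸ hiAs.2) hst.symm
      · refine I.downward (fun i hi => ?_) (hanti B hB A hA hAB)
        obtain ⟨⟨hiB, hgt⟩, hc2⟩ := hi
        have hiAs := Set.notMem_compl_iff.mp hc2
        exact ⟨hiB, hiAs.1⟩
  -- the function f
  refine ⟨fun i => if h : ∃ s, i ∈ Z s then h.choose else Classical.arbitrary σ,
    fun A hA => ?_⟩
  set f : α → σ := fun i => if h : ∃ s, i ∈ Z s then h.choose else Classical.arbitrary σ with hf
  set D : σ → σ → Set α := fun s t =>
    if s = t then ∅ else (A ∩ {i | g A i = s}) ∩ Z t with hD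
  set S : σ → Set α := fun s =>
    ((A ∩ {i | g A i = s}) \ Z s) ∪ (⋃ t, D s t) with hS
  have hSI : ∀ s, S s ∈ I.carrier := by
    intro s
    refine union2 ((hZ s).1 _ ⟨A, hA, rfl⟩) (union_mem _ fun t => ?_)
    by_cases hst : s = t
    · simp [hD, hst, hempty]
    · simpa [hD, hst] using hpair A hA s t hst
  refine I.downward (fun i hi => ?_) (union_mem S hSI)
  obtain ⟨hiA, hif⟩ := hi
  set s := g A i with hs
  refine Set.mem_iUnion.mpr ⟨s, ?_⟩
  by_cases hex : ∃ t, i ∈ Z t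
  · have hfi : f i = hex.choose := by simp [hf, hex]
    have hmem : i ∈ Z hex.choose := hex.choose_spec
    have hts : hex.choose ≠ s := by rw [← hfi]; exact hif
    refine Or.inr (Set.mem_iUnion.mpr ⟨hex.choose, ?_⟩)
    simp only [hD, if_neg (Ne.symm hts)]
    exact ⟨⟨hiA, rfl⟩, hmem⟩
  · refine Or.inl ⟨⟨hiA, rfl⟩, fun hiZ => hex ⟨s, hiZ⟩⟩
end
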